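/- arXiv:2006.09434 — 4 statements merged into one kernel-verified Lean document; each statement's English description precedes it below -/
import Mathlib

section
/- Brauer's theorem: Let A be an n×n complex matrix with characteristic polynomial splitting with eigenvalues λ₁,…,λₙ (counted with multiplicity), let x be an eigenvector of A for λ₁, and let q ∈ ℂⁿ. Then the characteristic polynomial of A + x qᵀ equals that of A with the root λ₁ replaced by λ₁ + qᵀx; i.e., charpoly(A + x qᵀ) = (X − λ₁ − qᵀx) · ∏_{i=2}^{n} (X − λᵢ). -/
/-!
Since `x` is an eigenvector of `tI - A` with eigenvalue `t - λ₁`, the matrix determinant lemma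
gives `det (tI - A - x qᵀ) = det (tI - A) · (1 - qᵀ (tI - A)⁻¹ x)`
`= det (tI - A) · (1 - qᵀx / (t - λ₁))`. We run this argument with `t = X` in the fraction field
of the polynomial ring, where `det (XI - A)` is invertible, and then cancel the factor `X - λ₁`.
-/

open Matrix Polynomial

namespace Matrix

variable {n : Type*} [Fintype n] [DecidableEq n]

theorem mul_det_add_vecMulVec_of_mulVec_eq_smul {K : Type*} [CommRing K] {M : Matrix n n K}
    (hM : IsUnit M.det) {x : n → K} {c : K} (hx : M *ᵥ x = c • x) (v : n → K) :
    c * (M + vecMulVec x v).det = (c + v ⬝ᵥ x) * M.det := by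
  set y := M⁻¹ *ᵥ x
  have hy : c • y = x := by
    rw [← mulVec_smul, ← hx, mulVec_mulVec, nonsing_inv_mul M hM, one_mulVec]
  have hMy : M *ᵥ y = x := by rw [mulVec_mulVec, mul_nonsing_inv M hM, one_mulVec]
  have hfactor : M + vecMulVec x v = M * (1 + vecMulVec y v) := by
    rw [Matrix.mul_add, Matrix.mul_one, mul_vecMulVec, hMy]
  rw [hfactor, det_mul, vecMulVec_eq Unit, det_one_add_replicateCol_mul_replicateRow, ← hy,
    dotProduct_smul, smul_eq_mul]
  ring

variable {R : Type*} [CommRing R]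

theorem charmatrix_mulVec_of_mulVec_eq_smul {A : Matrix n n R} {x : n → R} {μ : R}
    (hAx : A *ᵥ x = μ • x) :
    charmatrix A *ᵥ (C ∘ x) = (X - C μ) • (C ∘ x) := by
  funext i
  have hmap := RingHom.map_mulVec C A x i
  rw [hAx] at hmap
  simp only [charmatrix, sub_mulVec, scalar_apply, mulVec_diagonal, Pi.sub_apply, ← hmap,
    Pi.smul_apply, Function.comp_apply, smul_eq_mul, RingHom.mapMatrix_apply, map_mul]
  ring

theorem charmatrix_add_vecMulVec (A : Matrix n n R) (x q : n → R) :
    charmatrix (A + vecMulVec x q) = charmatrix A + vecMulVec (C ∘ (-x)) (C ∘ q) := by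
  ext i j : 1
  by_cases h : i = j <;> simp [h, charmatrix, vecMulVec_apply] <;> ring

theorem mul_charpoly_add_vecMulVec_of_mulVec_eq_smul [IsDomain R] {A : Matrix n n R} {x : n → R}
    {μ : R} (hAx : A *ᵥ x = μ • x) (q : n → R) :
    (X - C μ) * (A + vecMulVec x q).charpoly = (X - C (μ + q ⬝ᵥ x)) * A.charpoly := by
  let φ := algebraMap R[X] (FractionRing R[X])
  have hunit : IsUnit ((charmatrix A).map φ).det := by
    rw [← RingHom.mapMatrix_apply, ← RingHom.map_det, isUnit_iff_ne_zero,
      map_ne_zero_iff φ (IsFractionRing.injective _ _)]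
    exact (charpoly_monic A).ne_zero
  have heigen :
      (charmatrix A).map φ *ᵥ (φ ∘ C ∘ (-x)) = φ (X - C μ) • (φ ∘ C ∘ (-x)) := by
    have hneg : A *ᵥ (-x) = μ • (-x) := by rw [mulVec_neg, hAx, smul_neg]
    funext i
    rw [← RingHom.map_mulVec, charmatrix_mulVec_of_mulVec_eq_smul hneg]
    simp
  have key := mul_det_add_vecMulVec_of_mulVec_eq_smul hunit heigen (φ ∘ C ∘ q)
  have hupdate : (charmatrix A).map φ + vecMulVec (φ ∘ C ∘ (-x)) (φ ∘ C ∘ q) =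
      (charmatrix (A + vecMulVec x q)).map φ := by
    ext i j
    simp [charmatrix_add_vecMulVec, vecMulVec_apply]
  have hdot : (φ ∘ C ∘ q) ⬝ᵥ (φ ∘ C ∘ (-x)) = φ (C (-(q ⬝ᵥ x))) := by
    rw [← dotProduct_neg]
    exact (RingHom.map_dotProduct (φ.comp C) q (-x)).symm
  rw [hupdate, hdot, ← RingHom.mapMatrix_apply, ← RingHom.mapMatrix_apply, ← RingHom.map_det,
    ← RingHom.map_det, ← map_add, ← map_mul, ← map_mul] at key
  apply IsFractionRing.injective R[X] (FractionRing R[X])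
  rw [charpoly, charpoly, key, C_add, C_neg, ← sub_eq_add_neg, sub_sub]

theorem charpoly_add_vecMulVec_of_charpoly_eq_mul [IsDomain R] {A : Matrix n n R} {x : n → R}
    {μ : R} (hAx : A *ᵥ x = μ • x) (q : n → R) {p : R[X]}
    (hp : A.charpoly = (X - C μ) * p) :
    (A + vecMulVec x q).charpoly = (X - C (μ + q ⬝ᵥ x)) * p := by
  apply mul_left_cancel₀ (X_sub_C_ne_zero μ)
  rw [mul_charpoly_add_vecMulVec_of_mulVec_eq_smul hAx, hp, mul_left_comm]

end Matrix

theorem stmt1_general {n : ℕ} (A : Matrix (Fin (n + 1)) (Fin (n + 1)) ℂ)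
    (lam : Fin (n + 1) → ℂ)
    (hchar : A.charpoly = ∏ i, (X - C (lam i)))
    (x q : Fin (n + 1) → ℂ)
    (hAx : A.mulVec x = lam 0 • x) :
    (A + vecMulVec x q).charpoly =
      (X - C (lam 0 + q ⬝ᵥ x)) * ∏ i ∈ Finset.univ.erase 0, (X - C (lam i)) :=
  charpoly_add_vecMulVec_of_charpoly_eq_mul hAx q <| by
    rw [hchar]
    exact (Finset.mul_prod_erase _ (fun i => X - C (lam i)) (Finset.mem_univ 0)).symm

/-- Brauer's theorem: a rank-one update `A + x qᵀ` along an eigenvector `x` for `λ 0` replaces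
the root `λ 0` of the characteristic polynomial by `λ 0 + qᵀ x`, keeping all other roots. -/
theorem stmt1 {n : ℕ} (A : Matrix (Fin (n + 1)) (Fin (n + 1)) ℂ)
    (lam : Fin (n + 1) → ℂ)
    (hchar : A.charpoly = ∏ i, (X - C (lam i)))
    (x q : Fin (n + 1) → ℂ) (hx : x ≠ 0)
    (hAx : A.mulVec x = lam 0 • x) :
    (A + vecMulVec x q).charpoly =
      (X - C (lam 0 + q ⬝ᵥ x)) * ∏ i ∈ Finset.univ.erase 0, (X - C (lam i)) :=
  stmt1_general A lam hchar x q hAx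
end

section
/- Let A ∈ ℂ^{n×n} satisfy A* H = ε₂ H A with H invertible and ε₂ ∈ {1,−1}, and let (X₁, Λ₁), (X₂, Λ₂) be invariant pairs of A. If the spectra of ε₂ Λ₁* and Λ₂ are disjoint, then X₁* H X₂ = 0. -/
/-
Transposing `A X₁ = X₁ Λ₁` and using `Aᴴ H = ε₂ H A` gives `Λ₁ᴴ M = ε₂ M Λ₂` for `M = X₁ᴴ H X₂`,
i.e. the Sylvester equation `(ε₂ Λ₁ᴴ) M = M Λ₂` since `ε₂² = 1`. Such an intertwining
`B M = M C` propagates to `p(B) M = M p(C)` for every polynomial `p`; taking `p` the characteristic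
polynomial of `C` kills the right-hand side, while by spectral mapping `p(B)` is invertible
because no eigenvalue of `B` is a root of `p`. Hence `M = 0`.
-/

open Matrix Polynomial

namespace Matrix

variable {R : Type*} {ι κ : Type*} [Fintype ι] [DecidableEq ι] [Fintype κ] [DecidableEq κ]

lemma aeval_mul_eq_mul_aeval_of_mul_eq [CommRing R] {B : Matrix ι ι R} {M : Matrix ι κ R}
    {C : Matrix κ κ R} (h : B * M = M * C) (f : R[X]) :
    aeval B f * M = M * aeval C f := by
  have hpow : ∀ m : ℕ, B ^ m * M = M * C ^ m := by
    intro m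
    induction m with
    | zero => simp
    | succ m ih =>
      rw [pow_succ, pow_succ, Matrix.mul_assoc, h, ← Matrix.mul_assoc, ih, Matrix.mul_assoc]
  induction f using Polynomial.induction_on' with
  | add f g hf hg => rw [map_add, map_add, Matrix.add_mul, Matrix.mul_add, hf, hg]
  | monomial m a =>
    simp only [aeval_monomial, Algebra.algebraMap_eq_smul_one, smul_mul_assoc, one_mul,
      Matrix.smul_mul, Matrix.mul_smul, hpow m]

lemma eq_zero_of_mul_eq_mul_of_disjoint_spectrum [Field R] [IsAlgClosed R]
    {B : Matrix ι ι R} {M : Matrix ι κ R} {C : Matrix κ κ R} (h : B * M = M * C)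
    (hdisj : Disjoint (spectrum R B) (spectrum R C)) : M = 0 := by
  cases isEmpty_or_nonempty ι
  · exact Subsingleton.elim _ _
  have hB : IsUnit (aeval B C.charpoly) := by
    rw [← spectrum.zero_notMem_iff R, spectrum.map_polynomial_aeval_of_nonempty B _
      (spectrum.nonempty_of_isAlgClosed_of_finiteDimensional R B)]
    rintro ⟨μ, hμB, hμC⟩
    exact hdisj.notMem_of_mem_left hμB (mem_spectrum_of_isRoot_charpoly hμC)
  have hkill : aeval B C.charpoly * M = 0 := by
    rw [aeval_mul_eq_mul_aeval_of_mul_eq h, aeval_self_charpoly, Matrix.mul_zero]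
  let := hB.invertible
  exact (mul_right_inj_of_invertible _).1 (by rw [hkill, Matrix.mul_zero])

lemma conjTranspose_mul_mul_mul_eq_smul [CommRing R] [StarRing R] {n p₁ p₂ : Type*}
    [Fintype n] [Fintype p₁] [Fintype p₂] {A H : Matrix n n R} {e : R}
    (hA : Aᴴ * H = e • (H * A)) {X₁ : Matrix n p₁ R} {Λ₁ : Matrix p₁ p₁ R}
    {X₂ : Matrix n p₂ R} {Λ₂ : Matrix p₂ p₂ R} (h₁ : A * X₁ = X₁ * Λ₁)
    (h₂ : A * X₂ = X₂ * Λ₂) :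
    Λ₁ᴴ * (X₁ᴴ * H * X₂) = e • (X₁ᴴ * H * X₂ * Λ₂) := by
  have h₁' : Λ₁ᴴ * X₁ᴴ = X₁ᴴ * Aᴴ := by
    rw [← conjTranspose_mul, ← h₁, conjTranspose_mul]
  calc Λ₁ᴴ * (X₁ᴴ * H * X₂) = X₁ᴴ * (Aᴴ * H) * X₂ := by
        simp only [← Matrix.mul_assoc, h₁']
    _ = e • (X₁ᴴ * H * (A * X₂)) := by
        rw [hA, Matrix.mul_smul, Matrix.smul_mul]; simp only [Matrix.mul_assoc]
    _ = e • (X₁ᴴ * H * X₂ * Λ₂) := by rw [h₂]; simp only [Matrix.mul_assoc]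

end Matrix

theorem stmt5_general {n p₁ p₂ : ℕ}
    (A H : Matrix (Fin n) (Fin n) ℂ)
    (e2 : ℂ) (he2 : e2 = 1 ∨ e2 = -1)
    (hA : Aᴴ * H = e2 • (H * A))
    (X₁ : Matrix (Fin n) (Fin p₁) ℂ) (Lam₁ : Matrix (Fin p₁) (Fin p₁) ℂ)
    (X₂ : Matrix (Fin n) (Fin p₂) ℂ) (Lam₂ : Matrix (Fin p₂) (Fin p₂) ℂ)
    (h₁ : A * X₁ = X₁ * Lam₁) (h₂ : A * X₂ = X₂ * Lam₂)
    (hdisj : spectrum ℂ (e2 • Lam₁ᴴ) ∩ spectrum ℂ Lam₂ = ∅) :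
    X₁ᴴ * H * X₂ = 0 := by
  have he2sq : e2 * e2 = 1 := by rcases he2 with rfl | rfl <;> norm_num
  have hsyl : (e2 • Lam₁ᴴ) * (X₁ᴴ * H * X₂) = X₁ᴴ * H * X₂ * Lam₂ := by
    rw [Matrix.smul_mul, conjTranspose_mul_mul_mul_eq_smul hA h₁ h₂, smul_smul, he2sq, one_smul]
  exact eq_zero_of_mul_eq_mul_of_disjoint_spectrum hsyl (Set.disjoint_iff_inter_eq_empty.2 hdisj)

/-- If the spectra of `ε₂ Λ₁ᴴ` and `Λ₂` are disjoint, then the invariant-pair Gram block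
`X₁ᴴ H X₂` vanishes, for `A` structured with respect to `H` (`Aᴴ H = ε₂ • H A`). -/
theorem stmt5 {n p₁ p₂ : ℕ}
    (A H : Matrix (Fin n) (Fin n) ℂ) (hH : IsUnit H)
    (e2 : ℂ) (he2 : e2 = 1 ∨ e2 = -1)
    (hA : Aᴴ * H = e2 • (H * A))
    (X₁ : Matrix (Fin n) (Fin p₁) ℂ) (Lam₁ : Matrix (Fin p₁) (Fin p₁) ℂ)
    (X₂ : Matrix (Fin n) (Fin p₂) ℂ) (Lam₂ : Matrix (Fin p₂) (Fin p₂) ℂ)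
    (h₁ : A * X₁ = X₁ * Lam₁) (h₂ : A * X₂ = X₂ * Lam₂)
    (hdisj : spectrum ℂ (e2 • Lam₁ᴴ) ∩ spectrum ℂ Lam₂ = ∅) :
    X₁ᴴ * H * X₂ = 0 :=
  stmt5_general A H e2 he2 hA X₁ Lam₁ X₂ Lam₂ h₁ h₂ hdisj
end

section
/- Structured mapping (sufficiency): Let H be unitary with H⋆ = ε₁H, X ∈ 𝕂^{n×p} full column rank, B ∈ 𝕂^{n×p} with X⋆HB = ε₁ε₂(X⋆HB)⋆. Then the matrix A₀ = BX⁺ + ε₁ε₂ H^{-1}[(HBX⁺)⋆ − (X⁺)⋆(X⋆HB)⋆X⁺] satisfies A₀X = B and HA₀ = ε₁ε₂(HA₀)⋆. -/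
/-!
With `ε = ε₁ε₂`, the correction term `ε H⁻¹ [(HBX⁺)ᴴ − (X⁺)ᴴ(XᴴHB)ᴴX⁺]` is designed so
that `H A₀ = HBX⁺ + ε (HBX⁺)ᴴ − ε (X⁺)ᴴ(XᴴHB)ᴴX⁺`: the first two summands are swapped by
`M ↦ ε Mᴴ`, and the hypothesis on `XᴴHB` makes the last one invariant under it. Since `X⁺X = 1` for `X` of full
column rank, the correction term is annihilated by `X` on the right, because
`(HBX⁺)ᴴX = (X⁺)ᴴBᴴHᴴX = (X⁺)ᴴ(XᴴHB)ᴴX⁺X`.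
-/

open Matrix

/-- `Xp` satisfies the four Moore–Penrose axioms for `X`. -/
def IsMoorePenroseInv {K : Type*} [Field K] [StarRing K] {n p : ℕ}
    (X : Matrix (Fin n) (Fin p) K) (Xp : Matrix (Fin p) (Fin n) K) : Prop :=
  X * Xp * X = X ∧ Xp * X * Xp = Xp ∧ (X * Xp)ᴴ = X * Xp ∧ (Xp * X)ᴴ = Xp * X

namespace Matrix

variable {K : Type*} {m n : Type*} [Fintype n]

section Field

variable [Field K]

theorem mulVec_injective_of_rank_eq_card {X : Matrix m n K} (hX : X.rank = Fintype.card n) :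
    Function.Injective X.mulVec := by
  have h := LinearMap.finrank_range_add_finrank_ker X.mulVecLin
  rw [← Matrix.rank, hX, Module.finrank_fintype_fun_eq_card, add_eq_left] at h
  exact LinearMap.ker_eq_bot.mp (Submodule.finrank_eq_zero.mp h)

theorem eq_of_mul_eq_mul_of_rank_eq_card {o : Type*} [Fintype o] {X : Matrix m n K}
    (hX : X.rank = Fintype.card n) {A B : Matrix n o K} (h : X * A = X * B) : A = B := by
  rw [ext_iff_mulVec]
  intro v
  apply mulVec_injective_of_rank_eq_card hX
  rw [mulVec_mulVec, mulVec_mulVec, h]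

end Field

section StructuredMapping

variable [Fintype m] [DecidableEq m] [CommRing K] [StarRing K]

noncomputable def structuredMapping (ε : K) (H : Matrix m m K) (X B : Matrix m n K)
    (Xp : Matrix n m K) : Matrix m m K :=
  B * Xp + ε • (H⁻¹ * ((H * B * Xp)ᴴ - Xpᴴ * (Xᴴ * H * B)ᴴ * Xp))

theorem structuredMapping_mul_of_mul_eq_one [DecidableEq n] {ε : K} {H : Matrix m m K}
    {X B : Matrix m n K} {Xp : Matrix n m K} (hXpX : Xp * X = 1) :
    structuredMapping ε H X B Xp * X = B := by
  have hcorrection : ((H * B * Xp)ᴴ - Xpᴴ * (Xᴴ * H * B)ᴴ * Xp) * X = 0 := by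
    simp only [Matrix.sub_mul, conjTranspose_mul, conjTranspose_conjTranspose, Matrix.mul_assoc,
      hXpX, Matrix.mul_one, sub_self]
  rw [structuredMapping, Matrix.add_mul, Matrix.mul_assoc, hXpX, Matrix.mul_one, Matrix.smul_mul,
    Matrix.mul_assoc, hcorrection, Matrix.mul_zero, smul_zero, add_zero]

theorem mul_structuredMapping_eq_smul_conjTranspose {ε : K} {H : Matrix m m K}
    {X B : Matrix m n K} {Xp : Matrix n m K} (hH : IsUnit H.det) (hε : ε * ε = 1)
    (hε_star : star ε = ε) (hB : Xᴴ * H * B = ε • (Xᴴ * H * B)ᴴ) :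
    H * structuredMapping ε H X B Xp = ε • (H * structuredMapping ε H X B Xp)ᴴ := by
  set S := Xpᴴ * (Xᴴ * H * B)ᴴ * Xp
  have hS : Sᴴ = ε • S := by
    rw [show Sᴴ = Xpᴴ * (Xᴴ * H * B) * Xp by simp only [S, conjTranspose_mul,
      conjTranspose_conjTranspose, Matrix.mul_assoc], hB, Matrix.mul_smul, Matrix.smul_mul]
  have hHA : H * structuredMapping ε H X B Xp = H * B * Xp + ε • ((H * B * Xp)ᴴ - S) := by
    rw [structuredMapping, Matrix.mul_add, Matrix.mul_smul, ← Matrix.mul_assoc H H⁻¹,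
      mul_nonsing_inv H hH, Matrix.one_mul, Matrix.mul_assoc H B]
  rw [hHA, conjTranspose_add, conjTranspose_smul, conjTranspose_sub, conjTranspose_conjTranspose,
    hε_star, smul_add, smul_smul, hε, one_smul, smul_sub, hS]
  abel

end StructuredMapping

end Matrix

theorem IsMoorePenroseInv.mul_eq_one_of_rank_eq {K : Type*} [Field K] [StarRing K] {n p : ℕ}
    {X : Matrix (Fin n) (Fin p) K} {Xp : Matrix (Fin p) (Fin n) K} (hXp : IsMoorePenroseInv X Xp)
    (hX : X.rank = p) : Xp * X = 1 :=
  eq_of_mul_eq_mul_of_rank_eq_card (by rw [hX, Fintype.card_fin])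
    (by rw [← Matrix.mul_assoc, hXp.1, Matrix.mul_one])

theorem stmt13_general {K : Type*} [Field K] [StarRing K] {n p : ℕ}
    (H : Matrix (Fin n) (Fin n) K)
    (e1 e2 : K) (he1 : e1 = 1 ∨ e1 = -1) (he2 : e2 = 1 ∨ e2 = -1)
    (hHunit : Hᴴ * H = 1)
    (X B : Matrix (Fin n) (Fin p) K) (hrank : X.rank = p)
    (Xp : Matrix (Fin p) (Fin n) K) (hXp : IsMoorePenroseInv X Xp)
    (hB : Xᴴ * H * B = (e1 * e2) • (Xᴴ * H * B)ᴴ) :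
    (B * Xp + (e1 * e2) • (H⁻¹ * ((H * B * Xp)ᴴ - Xpᴴ * (Xᴴ * H * B)ᴴ * Xp))) * X = B ∧
    H * (B * Xp + (e1 * e2) • (H⁻¹ * ((H * B * Xp)ᴴ - Xpᴴ * (Xᴴ * H * B)ᴴ * Xp)))
      = (e1 * e2) •
        (H * (B * Xp + (e1 * e2) • (H⁻¹ * ((H * B * Xp)ᴴ - Xpᴴ * (Xᴴ * H * B)ᴴ * Xp))))ᴴ := by
  have hε : e1 * e2 = 1 ∨ e1 * e2 = -1 := by
    rcases he1 with rfl | rfl <;> rcases he2 with rfl | rfl <;> simp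
  exact ⟨structuredMapping_mul_of_mul_eq_one (hXp.mul_eq_one_of_rank_eq hrank),
    mul_structuredMapping_eq_smul_conjTranspose (isUnit_det_of_left_inverse hHunit)
      (mul_self_eq_one_iff.mpr hε) (by rcases hε with h | h <;> simp [h]) hB⟩

/-- Structured mapping theorem, sufficiency: if `XᴴHB` has the symmetry
`XᴴHB = ε₁ε₂(XᴴHB)ᴴ`, then `A₀ = BX⁺ + ε₁ε₂ H⁻¹[(HBX⁺)ᴴ − (X⁺)ᴴ(XᴴHB)ᴴX⁺]`
satisfies `A₀ X = B` and is structured: `H A₀ = ε₁ε₂ (H A₀)ᴴ`. -/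
theorem stmt13 {K : Type*} [Field K] [StarRing K] {n p : ℕ}
    (H : Matrix (Fin n) (Fin n) K)
    (e1 e2 : K) (he1 : e1 = 1 ∨ e1 = -1) (he2 : e2 = 1 ∨ e2 = -1)
    (hHunit : Hᴴ * H = 1) (hHsym : Hᴴ = e1 • H)
    (X B : Matrix (Fin n) (Fin p) K) (hrank : X.rank = p)
    (Xp : Matrix (Fin p) (Fin n) K) (hXp : IsMoorePenroseInv X Xp)
    (hB : Xᴴ * H * B = (e1 * e2) • (Xᴴ * H * B)ᴴ) :
    (B * Xp + (e1 * e2) • (H⁻¹ * ((H * B * Xp)ᴴ - Xpᴴ * (Xᴴ * H * B)ᴴ * Xp))) * X = B ∧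
    H * (B * Xp + (e1 * e2) • (H⁻¹ * ((H * B * Xp)ᴴ - Xpᴴ * (Xᴴ * H * B)ᴴ * Xp)))
      = (e1 * e2) •
        (H * (B * Xp + (e1 * e2) • (H⁻¹ * ((H * B * Xp)ᴴ - Xpᴴ * (Xᴴ * H * B)ᴴ * Xp))))ᴴ :=
  stmt13_general H e1 e2 he1 he2 hHunit X B hrank Xp hXp hB
end

section
/- Rado's theorem: Let A ∈ ℂ^{n×n} with charpoly(A) = ∏ᵢ(X − λᵢ), let x₁,…,xₚ be linearly independent eigenvectors with Axⱼ = λⱼxⱼ, X = [x₁ … xₚ], Ω = diag(λ₁,…,λₚ), and C ∈ ℂ^{p×n} arbitrary. Then charpoly(A + XC) = ∏_{j=1}^{p}(X − μⱼ) · ∏_{k=p+1}^{n}(X − λ_k), where μ₁,…,μₚ are the eigenvalues of Ω + CX. -/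
/-!
If `A P = P B`, then `t - A` intertwines `P` with `t - B`, and a block factorisation gives
`det (t - A - P Q) · det (t - B) = det (t - A) · det (t - B - Q P)` as polynomials in `t`.
For `P` the matrix of eigenvectors and `B = Ω`, the factor `det (t - Ω)` is the product of the
eigenvalue factors belonging to the first `p` eigenvalues of `A`; cancelling it leaves the claim.
-/

open Matrix Polynomial

namespace Matrix

variable {R m p : Type*} [CommRing R] [Fintype m] [Fintype p]

theorem det_sub_mul_mul_det_of_mul_eq_mul [DecidableEq m] [DecidableEq p] {M : Matrix m m R}
    {N : Matrix p p R} {P : Matrix m p R} (Q : Matrix p m R) (h : M * P = P * N) :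
    (M - P * Q).det * N.det = M.det * (N - Q * P).det := by
  -- `[M P; Q 1] [1 0; 0 N] = [M 0; Q (N - Q P)] [1 P; 0 1]`, using `M P = P N`.
  have hblocks : fromBlocks M P Q 1 * fromBlocks 1 0 0 N =
      fromBlocks M 0 Q (N - Q * P) * fromBlocks 1 P 0 1 := by
    simp only [fromBlocks_multiply, Matrix.mul_one, Matrix.one_mul, Matrix.mul_zero,
      add_zero, zero_add, h, add_sub_cancel]
  simpa using congrArg det hblocks

theorem charmatrix_add_mul [DecidableEq m] (A : Matrix m m R) (P : Matrix m p R)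
    (Q : Matrix p m R) : charmatrix (A + P * Q) = charmatrix A - P.map C * Q.map C := by
  rw [charmatrix, charmatrix, map_add, RingHom.mapMatrix_apply, RingHom.mapMatrix_apply,
    Matrix.map_mul, sub_add_eq_sub_sub]

theorem charmatrix_mul_eq_mul_charmatrix [DecidableEq m] [DecidableEq p] {A : Matrix m m R}
    {B : Matrix p p R} {P : Matrix m p R} (h : A * P = P * B) :
    charmatrix A * P.map C = P.map C * charmatrix B := by
  simp only [charmatrix, RingHom.mapMatrix_apply, Matrix.sub_mul, Matrix.mul_sub,
    ← Matrix.map_mul, h, scalar_apply]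
  congr 1
  ext i j : 1
  rw [diagonal_mul, mul_diagonal, X_mul]

theorem charpoly_add_mul_mul_charpoly_of_mul_eq_mul [DecidableEq m] [DecidableEq p]
    {A : Matrix m m R} {B : Matrix p p R} {P : Matrix m p R} (Q : Matrix p m R)
    (h : A * P = P * B) :
    (A + P * Q).charpoly * B.charpoly = A.charpoly * (B + Q * P).charpoly := by
  simpa only [charpoly, charmatrix_add_mul, Matrix.map_mul] using
    det_sub_mul_mul_det_of_mul_eq_mul (Q.map C) (charmatrix_mul_eq_mul_charmatrix h)

theorem mul_eq_mul_diagonal_of_mulVec_eq_smul [DecidableEq p] {A : Matrix m m R}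
    {v : p → m → R} {d : p → R} (h : ∀ j, A *ᵥ v j = d j • v j) :
    A * of (fun i j => v j i) = of (fun i j => v j i) * diagonal d := by
  ext i j
  rw [mul_diagonal]
  simpa [mul_apply, mulVec, dotProduct, mul_comm] using congrFun (h j) i

end Matrix

theorem Fin.prod_univ_eq_prod_castLE_mul_prod_filter {M : Type*} [CommMonoid M] {p n : ℕ}
    (hp : p ≤ n) (f : Fin n → M) :
    ∏ i, f i = (∏ j : Fin p, f (Fin.castLE hp j)) *
      ∏ k ∈ Finset.univ.filter (fun k : Fin n => p ≤ (k : ℕ)), f k := by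
  rw [← Finset.prod_filter_mul_prod_filter_not Finset.univ (fun k : Fin n => (k : ℕ) < p)]
  congr 1
  · refine (Finset.prod_bij (fun j _ => Fin.castLE hp j) ?_ ?_ ?_ ?_).symm
    · simp
    · simp [Fin.castLE_inj]
    · intro k hk
      exact ⟨⟨k, (Finset.mem_filter.1 hk).2⟩, Finset.mem_univ _, rfl⟩
    · simp
  · simp only [not_lt]

theorem stmt17_general {n p : ℕ} (hp : p ≤ n) (A : Matrix (Fin n) (Fin n) ℂ)
    (lam : Fin n → ℂ) (hchar : A.charpoly = ∏ i, (X - C (lam i)))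
    (x : Fin p → (Fin n → ℂ))
    (heig : ∀ j, A.mulVec (x j) = lam (Fin.castLE hp j) • x j)
    (Xm : Matrix (Fin n) (Fin p) ℂ) (hXm : Xm = Matrix.of fun i j => x j i)
    (Cm : Matrix (Fin p) (Fin n) ℂ)
    (Ω : Matrix (Fin p) (Fin p) ℂ) (hΩ : Ω = Matrix.diagonal fun j => lam (Fin.castLE hp j))
    (mu : Fin p → ℂ) (hmu : (Ω + Cm * Xm).charpoly = ∏ j, (X - C (mu j))) :
    (A + Xm * Cm).charpoly =
      (∏ j, (X - C (mu j))) *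
        ∏ k ∈ Finset.univ.filter (fun k : Fin n => p ≤ (k : ℕ)), (X - C (lam k)) := by
  have hAX : A * Xm = Xm * Ω := hXm ▸ hΩ ▸ mul_eq_mul_diagonal_of_mulVec_eq_smul heig
  have key := charpoly_add_mul_mul_charpoly_of_mul_eq_mul Cm hAX
  rw [hchar, Fin.prod_univ_eq_prod_castLE_mul_prod_filter hp, hmu, hΩ, charpoly_diagonal] at key
  refine mul_right_cancel₀ (charpoly_monic (diagonal fun j => lam (Fin.castLE hp j))).ne_zero ?_
  rw [charpoly_diagonal, key]
  ring

/-- Rado's theorem: the update `A + X C` along `p` linearly independent eigenvectors replaces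
the corresponding `p` eigenvalues of `A` by the eigenvalues of `Ω + C X`, keeping the others. -/
theorem stmt17 {n p : ℕ} (hp : p ≤ n) (A : Matrix (Fin n) (Fin n) ℂ)
    (lam : Fin n → ℂ) (hchar : A.charpoly = ∏ i, (X - C (lam i)))
    (x : Fin p → (Fin n → ℂ)) (hli : LinearIndependent ℂ x)
    (heig : ∀ j, A.mulVec (x j) = lam (Fin.castLE hp j) • x j)
    (Xm : Matrix (Fin n) (Fin p) ℂ) (hXm : Xm = Matrix.of fun i j => x j i)
    (Cm : Matrix (Fin p) (Fin n) ℂ)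
    (Ω : Matrix (Fin p) (Fin p) ℂ) (hΩ : Ω = Matrix.diagonal fun j => lam (Fin.castLE hp j))
    (mu : Fin p → ℂ) (hmu : (Ω + Cm * Xm).charpoly = ∏ j, (X - C (mu j))) :
    (A + Xm * Cm).charpoly =
      (∏ j, (X - C (mu j))) *
        ∏ k ∈ Finset.univ.filter (fun k : Fin n => p ≤ (k : ℕ)), (X - C (lam k)) :=
  stmt17_general hp A lam hchar x heig Xm hXm Cm Ω hΩ mu hmu
end
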